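/- arXiv:1911.01306 — 4 statements merged into one kernel-verified Lean document; each statement's English description precedes it below -/
import Mathlib

section
/- Let γ^p and δ^τ be defined on ℕ by γ^p(0)=p, γ^p(t)=+∞ for t>0, and δ^τ(t)=0 for t ≤ τ, δ^τ(t)=+∞ for t>τ. Then the sub-additive closure (γ^p δ^τ)^* = ⊕_{k≥0} (γ^p δ^τ)^k satisfies (γ^p δ^τ)^*(t) ≥ (p/τ)·t for all t ∈ ℕ, where p, τ are positive reals. -/
/-- Min-plus convolution of functions `ℕ → ℝ∪{+∞}` (modeled as `EReal`). -/
noncomputable def minPlusConv (f g : ℕ → EReal) : ℕ → EReal :=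
  fun t => ⨅ s ∈ Finset.Iic t, (f s + g (t - s))

/-- Unit of min-plus convolution. -/
noncomputable def unitFun : ℕ → EReal := fun t => if t = 0 then 0 else ⊤

/-- Convolution powers: `f^0 = e`, `f^(k+1) = f * f^k`. -/
noncomputable def minPlusPow (f : ℕ → EReal) : ℕ → (ℕ → EReal)
  | 0 => unitFun
  | k + 1 => minPlusConv f (minPlusPow f k)

/-- Sub-additive closure `f^* = ⊕_{k ≥ 0} f^k`. -/
noncomputable def minPlusStar (f : ℕ → EReal) : ℕ → EReal :=
  fun t => ⨅ k : ℕ, minPlusPow f k t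

/-- The gain signal `γ^p`. -/
noncomputable def gammaSig (p : ℝ) : ℕ → EReal :=
  fun t => if t = 0 then (p : EReal) else ⊤

/-- The time-shift signal `δ^τ`. -/
noncomputable def deltaSig (τ : ℝ) : ℕ → EReal :=
  fun t => if (t : ℝ) ≤ τ then 0 else ⊤

/-! Since `t ↦ c * t` is additive, lying above it is preserved by min-plus convolution and by
infima, hence by the closure. And `γ^p δ^τ (t) = p + δ^τ (t)` is finite only for `t ≤ τ`, where
it equals `p ≥ (p / τ) * t`. -/

def AboveLine (c : ℝ) (f : ℕ → EReal) : Prop :=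
  ∀ t : ℕ, ((c * t : ℝ) : EReal) ≤ f t

theorem aboveLine_unitFun (c : ℝ) : AboveLine c unitFun := by
  intro t
  rcases eq_or_ne t 0 with rfl | ht
  · simp [unitFun]
  · simp [unitFun, ht]

theorem AboveLine.minPlusConv {c : ℝ} {f g : ℕ → EReal} (hf : AboveLine c f)
    (hg : AboveLine c g) : AboveLine c (minPlusConv f g) := by
  intro t
  refine le_iInf₂ fun s hs => ?_
  have hsplit : c * t = c * s + c * (t - s : ℕ) := by
    rw [Nat.cast_sub (Finset.mem_Iic.mp hs)]
    ring
  rw [hsplit, EReal.coe_add]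
  exact add_le_add (hf s) (hg (t - s))

theorem AboveLine.minPlusPow {c : ℝ} {f : ℕ → EReal} (hf : AboveLine c f) (k : ℕ) :
    AboveLine c (minPlusPow f k) := by
  induction k with
  | zero => exact aboveLine_unitFun c
  | succ k ih => exact hf.minPlusConv ih

theorem AboveLine.minPlusStar {c : ℝ} {f : ℕ → EReal} (hf : AboveLine c f) :
    AboveLine c (minPlusStar f) :=
  fun t => le_iInf fun k => hf.minPlusPow k t

theorem minPlusConv_gammaSig (p : ℝ) {g : ℕ → EReal} (hg : ∀ t, g t ≠ ⊥) (t : ℕ) :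
    minPlusConv (gammaSig p) g t = p + g t := by
  refine le_antisymm (iInf₂_le_of_le 0 (Finset.mem_Iic.mpr (Nat.zero_le t)) ?_) ?_
  · simp [gammaSig]
  · refine le_iInf₂ fun s _ => ?_
    rcases eq_or_ne s 0 with rfl | hs
    · simp [gammaSig]
    · simp [gammaSig, hs, EReal.top_add_of_ne_bot (hg _)]

theorem deltaSig_ne_bot (τ : ℝ) (t : ℕ) : deltaSig τ t ≠ ⊥ := by
  unfold deltaSig
  split_ifs <;> simp

theorem aboveLine_coe_add_deltaSig {p τ : ℝ} (hp : 0 ≤ p) (hτ : 0 < τ) :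
    AboveLine (p / τ) fun t => p + deltaSig τ t := by
  intro t
  by_cases ht : (t : ℝ) ≤ τ
  · have : p / τ * t ≤ p := by
      calc p / τ * t ≤ p / τ * τ := by gcongr
        _ = p := div_mul_cancel₀ p hτ.ne'
    simp only [deltaSig, if_pos ht, add_zero]
    exact_mod_cast this
  · simp [deltaSig, ht]

theorem star_gamma_delta_ge_linear (p τ : ℝ) (hp : 0 < p) (hτ : 0 < τ) :
    ∀ t : ℕ, ((p / τ * t : ℝ) : EReal) ≤
      minPlusStar (minPlusConv (gammaSig p) (deltaSig τ)) t := by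
  have hbase : AboveLine (p / τ) (minPlusConv (gammaSig p) (deltaSig τ)) := by
    intro t
    rw [minPlusConv_gammaSig p (deltaSig_ne_bot τ)]
    exact aboveLine_coe_add_deltaSig hp.le hτ t
  exact hbase.minPlusStar
end

section
/- If U, Y : ℕ → ℝ are cumulative arrival and departure flows of a server with Y ≤ U pointwise, α is a maximum arrival curve for U (i.e., U(t) - U(s) ≤ α(t-s) for all s ≤ t), and β is a minimum service curve (i.e., Y(t) ≥ min over 0 ≤ s ≤ t of (β(s) + U(t-s))), then the backlog B(t) = U(t) - Y(t) satisfies B(t) ≤ sup over s ≥ 0 of (α(s) - β(s)) for all t. -/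
/-!
Since the service infimum ranges over the finite set `{0, …, t}`, it is attained at some lag `s`:
`β s + U (t - s) ≤ Y t`. Splitting the backlog as `U t - Y t = (U t - U (t - s)) + (U (t - s) - Y t)`,
the first part is at most `α s` by the arrival curve and the second at most `-β s`.
-/

theorem Finset.exists_mem_le_of_biInf_le {ι α : Type*} [CompleteLinearOrder α] {s : Finset ι}
    (hs : s.Nonempty) {f : ι → α} {a : α} (h : ⨅ i ∈ s, f i ≤ a) : ∃ i ∈ s, f i ≤ a := by
  rw [← Finset.inf_eq_iInf, ← Finset.inf'_eq_inf hs] at h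
  exact (Finset.inf'_le_iff hs).1 h

theorem EReal.coe_add_sub_le_sub {a b : EReal} {x y z : ℝ} (ha : (x : EReal) ≤ a)
    (hb : b + y ≤ z) : ((x + y - z : ℝ) : EReal) ≤ a - b := by
  have hb' : b ≤ ((z - y : ℝ) : EReal) := by
    rw [EReal.coe_sub, EReal.le_sub_iff_add_le (by simp) (by simp)]
    exact hb
  calc ((x + y - z : ℝ) : EReal) = (x : EReal) - ((z - y : ℝ) : EReal) := by
        rw [← EReal.coe_sub]; ring_nf
    _ ≤ a - b := EReal.sub_le_sub ha hb'

theorem backlog_bound_general (U Y : ℕ → ℝ) (α β : ℕ → EReal)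
    (harr : ∀ s t : ℕ, s ≤ t → ((U t - U s : ℝ) : EReal) ≤ α (t - s))
    (hserv : ∀ t : ℕ, (⨅ s ∈ Finset.Iic t, (β s + ((U (t - s) : ℝ) : EReal))) ≤ (Y t : EReal)) :
    ∀ t : ℕ, ((U t - Y t : ℝ) : EReal) ≤ ⨆ s : ℕ, (α s - β s) := by
  intro t
  obtain ⟨s, hs, hservice⟩ := Finset.exists_mem_le_of_biInf_le Finset.nonempty_Iic (hserv t)
  have harrival : ((U t - U (t - s) : ℝ) : EReal) ≤ α s := by
    simpa [Nat.sub_sub_self (Finset.mem_Iic.1 hs)] using harr (t - s) t (Nat.sub_le t s)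
  calc ((U t - Y t : ℝ) : EReal) = ((U t - U (t - s) + U (t - s) - Y t : ℝ) : EReal) := by ring_nf
    _ ≤ α s - β s := EReal.coe_add_sub_le_sub harrival hservice
    _ ≤ ⨆ s : ℕ, (α s - β s) := le_iSup (fun s => α s - β s) s

/-- Network-calculus backlog bound: `B(t) = U(t) - Y(t) ≤ sup_{s ≥ 0} (α(s) - β(s))`. -/
theorem backlog_bound (U Y : ℕ → ℝ) (α β : ℕ → EReal)
    (hU : Monotone U) (hY : Monotone Y) (hU0 : U 0 = 0) (hY0 : Y 0 = 0)
    (hYU : ∀ t, Y t ≤ U t) (hα0 : 0 ≤ α 0)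
    (harr : ∀ s t : ℕ, s ≤ t → ((U t - U s : ℝ) : EReal) ≤ α (t - s))
    (hserv : ∀ t : ℕ, (⨅ s ∈ Finset.Iic t, (β s + ((U (t - s) : ℝ) : EReal))) ≤ (Y t : EReal)) :
    ∀ t : ℕ, ((U t - Y t : ℝ) : EReal) ≤ ⨆ s : ℕ, (α s - β s) :=
  backlog_bound_general U Y α β harr hserv
end

section
/- If U, Y are cumulative arrival and departure flows with Y ≤ U, α a maximum arrival curve for U and β a minimum service curve for the server, then (α ⊘ β) is a maximum arrival curve for the output Y, i.e., Y(t) - Y(s) ≤ (α⊘β)(t-s) for all s ≤ t, where (α⊘β)(t) = sup over u ≥ 0 of (α(t+u) - β(u)). -/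
/-!
Fix `s ≤ t`. The infimum defining the service guarantee at time `s` is over a finite set, so
it is attained at some `v ≤ s`: `β v + U (s - v) ≤ Y s`. Since `Y t ≤ U t`, the output in
`(s, t]` is at most the input in `(s - v, t]` minus `β v`, and the arrival curve bounds that
input by `α (t - s + v)`; so `Y t - Y s ≤ α (t - s + v) - β v`, one term of the supremum.
-/

theorem Finset.exists_le_of_iInf_le {α ι : Type*} [CompleteLinearOrder α] {s : Finset ι}
    (hs : s.Nonempty) {f : ι → α} {a : α} (h : ⨅ i ∈ s, f i ≤ a) : ∃ i ∈ s, f i ≤ a :=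
  (Finset.inf'_le_iff hs).1 (by rwa [Finset.inf'_eq_inf, Finset.inf_eq_iInf])

theorem EReal.coe_sub_le_coe_sub_sub_of_add_le {b : EReal} {x y z : ℝ} (h : b + y ≤ z) :
    ((x - z : ℝ) : EReal) ≤ ((x - y : ℝ) : EReal) - b := by
  induction b using EReal.rec with
  | bot =>
    rw [EReal.sub_bot (EReal.coe_ne_bot _)]
    exact le_top
  | coe b =>
    norm_cast at h ⊢
    linarith
  | top => simp at h

theorem exists_le_of_minPlus_service {U Y : ℕ → ℝ} {β : ℕ → EReal} {t : ℕ}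
    (hserv : (⨅ s ∈ Finset.Iic t, (β s + ((U (t - s) : ℝ) : EReal))) ≤ (Y t : EReal)) :
    ∃ v ≤ t, β v + ((U (t - v) : ℝ) : EReal) ≤ (Y t : EReal) := by
  obtain ⟨v, hv, hle⟩ := Finset.exists_le_of_iInf_le Finset.nonempty_Iic hserv
  exact ⟨v, Finset.mem_Iic.mp hv, hle⟩

theorem output_arrival_curve_general (U Y : ℕ → ℝ) (α β : ℕ → EReal)
    (hYU : ∀ t, Y t ≤ U t)
    (harr : ∀ s t : ℕ, s ≤ t → ((U t - U s : ℝ) : EReal) ≤ α (t - s))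
    (hserv : ∀ t : ℕ, (⨅ s ∈ Finset.Iic t, (β s + ((U (t - s) : ℝ) : EReal))) ≤ (Y t : EReal)) :
    ∀ s t : ℕ, s ≤ t →
      ((Y t - Y s : ℝ) : EReal) ≤ ⨆ u : ℕ, (α (t - s + u) - β u) := by
  intro s t hst
  obtain ⟨v, hvs, hv⟩ := exists_le_of_minPlus_service (hserv s)
  have hinput : ((U t - U (s - v) : ℝ) : EReal) ≤ α (t - s + v) := by
    simpa only [show t - (s - v) = t - s + v by omega] using harr (s - v) t (by omega)
  calc ((Y t - Y s : ℝ) : EReal)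
      ≤ ((U t - Y s : ℝ) : EReal) := by exact_mod_cast sub_le_sub_right (hYU t) _
    _ ≤ ((U t - U (s - v) : ℝ) : EReal) - β v := EReal.coe_sub_le_coe_sub_sub_of_add_le hv
    _ ≤ α (t - s + v) - β v := EReal.sub_le_sub hinput le_rfl
    _ ≤ ⨆ u : ℕ, (α (t - s + u) - β u) := le_iSup (fun u => α (t - s + u) - β u) v

/-- Output characterization: `α ⊘ β` is a maximum arrival curve for the departure flow `Y`,
where `(α ⊘ β)(t) = sup_{u ≥ 0} (α(t+u) - β(u))`. -/
theorem output_arrival_curve (U Y : ℕ → ℝ) (α β : ℕ → EReal)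
    (hU : Monotone U) (hY : Monotone Y) (hU0 : U 0 = 0) (hY0 : Y 0 = 0)
    (hYU : ∀ t, Y t ≤ U t)
    (harr : ∀ s t : ℕ, s ≤ t → ((U t - U s : ℝ) : EReal) ≤ α (t - s))
    (hserv : ∀ t : ℕ, (⨅ s ∈ Finset.Iic t, (β s + ((U (t - s) : ℝ) : EReal))) ≤ (Y t : EReal)) :
    ∀ s t : ℕ, s ≤ t →
      ((Y t - Y s : ℝ) : EReal) ≤ ⨆ u : ℕ, (α (t - s + u) - β u) :=
  output_arrival_curve_general U Y α β hYU harr hserv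
end

section
/- Consider n ≥ 2 and 1 ≤ m ≤ n-1 and the train dynamics described by d_j(k) = max( d_{j-1}(k - b_j) + t_j , d_{j+1}(k - (1-b_{j+1})) + s_{j+1} ) with indices j modulo n, where b_j ∈ {0,1} with Σ_j b_j = m, and t_j, s_j > 0 are fixed. Suppose (h, v) ∈ ℝ × ℝⁿ satisfies the generalized eigenproblem v_j = max( v_{j-1} + t_j - b_j·h , v_{j+1} + s_{j+1} - (1-b_{j+1})·h ) for all j. Then h ≥ (Σ_j t_j)/m, h ≥ max_j (t_j + s_j), and h ≥ (Σ_j s_j)/(n-m). -/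
/-!
Each of the three bounds is the mean weight of a cycle in the precedence graph. Reading the
eigenproblem as the inequalities `v (j - 1) + t j - b j * h ≤ v j` and
`v (j + 1) + s (j + 1) - (1 - b (j + 1)) * h ≤ v j`, summing them along a cycle makes the
potential `v` telescope away, so the total weight of every cycle is nonpositive. The forward
ring, the backward ring and the two-link cycles `j → j - 1 → j` give the three bounds, with
`∑ b = m` trains on the forward ring and `n - m` empty segments on the backward one.
-/

open Finset

theorem sum_nonpos_of_add_le_comp_equiv {ι α : Type*} [Fintype ι] [AddCommGroup α]
    [PartialOrder α] [IsOrderedAddMonoid α] (e : ι ≃ ι) (v w : ι → α)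
    (hvw : ∀ j, v (e j) + w j ≤ v j) : ∑ j, w j ≤ 0 := by
  have hsum : ∑ j, v j + ∑ j, w j ≤ ∑ j, v j := by
    calc ∑ j, v j + ∑ j, w j = ∑ j, (v (e j) + w j) := by
          rw [sum_add_distrib, e.sum_comp]
      _ ≤ ∑ j, v j := sum_le_sum fun j _ => hvw j
  exact (add_le_iff_nonpos_right _).mp hsum

def IsMetroEigenpair {n : ℕ} [NeZero n] (t s b : Fin n → ℝ) (h : ℝ) (v : Fin n → ℝ) : Prop :=
  ∀ j : Fin n, v j = max (v (j - 1) + t j - b j * h) (v (j + 1) + s (j + 1) - (1 - b (j + 1)) * h)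

namespace IsMetroEigenpair

variable {n : ℕ} [NeZero n] {t s b : Fin n → ℝ} {h : ℝ} {v : Fin n → ℝ}

theorem forward_le (heig : IsMetroEigenpair t s b h v) (j : Fin n) :
    v (j - 1) + (t j - b j * h) ≤ v j := by
  rw [heig j, ← add_sub_assoc]
  exact le_max_left _ _

theorem backward_le (heig : IsMetroEigenpair t s b h v) (j : Fin n) :
    v (j + 1) + (s (j + 1) - (1 - b (j + 1)) * h) ≤ v j := by
  rw [heig j, ← add_sub_assoc]
  exact le_max_right _ _

theorem sum_sub_sum_mul_nonpos (heig : IsMetroEigenpair t s b h v) :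
    ∑ j, t j - (∑ j, b j) * h ≤ 0 := by
  rw [sum_mul, ← sum_sub_distrib]
  exact sum_nonpos_of_add_le_comp_equiv (Equiv.subRight 1) v _ heig.forward_le

theorem sum_sub_card_sub_sum_mul_nonpos (heig : IsMetroEigenpair t s b h v) :
    ∑ j, s j - ((n : ℝ) - ∑ j, b j) * h ≤ 0 := by
  have hcycle := sum_nonpos_of_add_le_comp_equiv (Equiv.addRight 1) v _ heig.backward_le
  have hshift : ∑ j, (s (j + 1) - (1 - b (j + 1)) * h) = ∑ j, (s j - (1 - b j) * h) :=
    Equiv.sum_comp (Equiv.addRight 1) fun j => s j - (1 - b j) * h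
  rw [hshift] at hcycle
  simpa [sum_sub_distrib, ← sum_mul] using hcycle

theorem add_le (heig : IsMetroEigenpair t s b h v) (j : Fin n) : t j + s j ≤ h := by
  have hforward := heig.forward_le j
  have hbackward := heig.backward_le (j - 1)
  rw [sub_add_cancel] at hbackward
  linarith

end IsMetroEigenpair

theorem metro_eigenvalue_lower_bounds_general {n : ℕ} [NeZero n]
    (m : ℕ) (hm1 : 1 ≤ m) (hm2 : m ≤ n - 1)
    (t s : Fin n → ℝ)
    (b : Fin n → ℝ) (hbsum : ∑ j, b j = (m : ℝ))
    (h : ℝ) (v : Fin n → ℝ)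
    (heig : ∀ j : Fin n,
      v j = max (v (j - 1) + t j - b j * h)
                (v (j + 1) + s (j + 1) - (1 - b (j + 1)) * h)) :
    (∑ j, t j) / (m : ℝ) ≤ h ∧
    Finset.univ.sup' Finset.univ_nonempty (fun j => t j + s j) ≤ h ∧
    (∑ j, s j) / ((n : ℝ) - (m : ℝ)) ≤ h := by
  have hm_pos : (0 : ℝ) < m := by exact_mod_cast hm1
  have hnm_pos : (0 : ℝ) < (n : ℝ) - m := by
    have : m < n := by have := NeZero.pos n; omega
    exact sub_pos.mpr (by exact_mod_cast this)
  have heig : IsMetroEigenpair t s b h v := heig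
  have hforward := heig.sum_sub_sum_mul_nonpos
  have hbackward := heig.sum_sub_card_sub_sum_mul_nonpos
  rw [hbsum] at hforward hbackward
  refine ⟨?_, sup'_le _ _ fun j _ => heig.add_le j, ?_⟩
  · rw [div_le_iff₀ hm_pos]
    linarith
  · rw [div_le_iff₀ hnm_pos]
    linarith

/-- For the max-plus metro-line model on a ring of `n ≥ 2` segments with `m` trains
(`b j = 1` iff a train occupies segment `j` at time 0), any solution `(h, v)` of the
generalized eigenproblem satisfies the three cycle-mean lower bounds:
`h ≥ (Σ t_j)/m`, `h ≥ max_j (t_j + s_j)` and `h ≥ (Σ s_j)/(n-m)`. -/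
theorem metro_eigenvalue_lower_bounds {n : ℕ} [NeZero n] (hn : 2 ≤ n)
    (m : ℕ) (hm1 : 1 ≤ m) (hm2 : m ≤ n - 1)
    (t s : Fin n → ℝ) (ht : ∀ j, 0 < t j) (hs : ∀ j, 0 < s j)
    (b : Fin n → ℝ) (hb : ∀ j, b j = 0 ∨ b j = 1) (hbsum : ∑ j, b j = (m : ℝ))
    (h : ℝ) (v : Fin n → ℝ)
    (heig : ∀ j : Fin n,
      v j = max (v (j - 1) + t j - b j * h)
                (v (j + 1) + s (j + 1) - (1 - b (j + 1)) * h)) :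
    (∑ j, t j) / (m : ℝ) ≤ h ∧
    Finset.univ.sup' Finset.univ_nonempty (fun j => t j + s j) ≤ h ∧
    (∑ j, s j) / ((n : ℝ) - (m : ℝ)) ≤ h :=
  metro_eigenvalue_lower_bounds_general m hm1 hm2 t s b hbsum h v heig
end
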